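/- arXiv:0812.4154 — 2 statements merged into one kernel-verified Lean document; each statement's English description precedes it below -/
import Mathlib

section
/- Let ε ∈ {1, −1} and let P(z) = Σ_{j=0}^m z^j A_j be a T-palindromic matrix polynomial if ε = 1 and a T-anti-palindromic matrix polynomial if ε = −1. Let λ ∈ ℂ, let x ∈ ℂⁿ with ‖x‖₂ = 1, set r := −P(λ)x and P_x := I − x xᴴ. For j = 0, …, m define ΔA_j := −(xᵀA_j x)· x̄ xᴴ + ‖Λ_m‖₂^{−2} · [ conj(λ)^j · P_xᵀ r xᴴ + ε · conj(λ)^{m−j} · x̄ rᵀ P_x ]. Then ΔA_{m−j} = ε (ΔA_j)ᵀ for all j = 0, …, m (so ΔP(z) := Σ_{j=0}^m z^j ΔA_j is T-palindromic if ε = 1 and T-anti-palindromic if ε = −1), and P(λ)x + ΔP(λ)x = 0. -/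
noncomputable section

/-- Euclidean (ℓ²) norm of a complex vector. -/
def vnorm {α : Type*} [Fintype α] (x : α → ℂ) : ℝ :=
  Real.sqrt (∑ i, ‖x i‖ ^ 2)

/-- Frobenius norm of a complex matrix. -/
def frobNorm {α : Type*} [Fintype α] (A : Matrix α α ℂ) : ℝ :=
  Real.sqrt (∑ i, ∑ j, ‖A i j‖ ^ 2)

/-- Spectral (operator 2-)norm of a complex matrix. -/
def specNorm {α : Type*} [Fintype α] [DecidableEq α] (A : Matrix α α ℂ) : ℝ :=
  ‖Matrix.toEuclideanCLM (𝕜 := ℂ) A‖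

/-- Evaluation of the matrix polynomial `P(z) = ∑_{j=0}^m z^j A_j`. -/
def evalP {n : ℕ} (m : ℕ) (A : ℕ → Matrix (Fin n) (Fin n) ℂ) (z : ℂ) :
    Matrix (Fin n) (Fin n) ℂ :=
  ∑ j ∈ Finset.range (m + 1), z ^ j • A j

/-- `‖Λ_m‖₂² = ∑_{j=0}^m |λ|^{2j}` where `Λ_m = (1, λ, …, λ^m)ᵀ`. -/
def LamNormSq (m : ℕ) (lam : ℂ) : ℝ :=
  ∑ j ∈ Finset.range (m + 1), ‖lam‖ ^ (2 * j)

/-- `‖Π₊(Λ_m)‖₂²`. -/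
def PiPlusSq (m : ℕ) (lam : ℂ) : ℝ :=
  if m % 2 = 1 then
    ∑ j ∈ Finset.range ((m + 1) / 2), ‖lam ^ j + lam ^ (m - j)‖ ^ 2 / 2
  else
    (∑ j ∈ Finset.range (m / 2), ‖lam ^ j + lam ^ (m - j)‖ ^ 2 / 2) + ‖lam ^ (m / 2)‖ ^ 2

/-- `‖Π₋(Λ_m)‖₂²`. -/
def PiMinusSq (m : ℕ) (lam : ℂ) : ℝ :=
  if m % 2 = 1 then
    ∑ j ∈ Finset.range ((m + 1) / 2), ‖lam ^ j - lam ^ (m - j)‖ ^ 2 / 2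
  else
    ∑ j ∈ Finset.range (m / 2), ‖lam ^ j - lam ^ (m - j)‖ ^ 2 / 2

/-!
With `u := P_xᵀ r`, each `ΔA_j` is `-(xᵀ A_j x) x̄ x̄ᵀ + s (λ̄^j u x̄ᵀ + ε λ̄^(m-j) x̄ uᵀ)`,
`s = ‖Λ_m‖₂⁻²`. Transposing swaps the two rank-one terms, so `ε² = 1` together with
`xᵀ A_{m-j} x = ε xᵀ A_j x` gives the palindromic structure. For the interpolation, `x̄ᵀ x = 1`
and `uᵀ x = rᵀ P_x x = 0`, hence `ΔP(λ) x = -(xᵀ P(λ) x) x̄ + s ‖Λ_m‖₂² u = (xᵀ r) x̄ + P_xᵀ r = r`.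
-/

open Matrix ComplexConjugate

theorem star_dotProduct_self_eq_one_of_vnorm_eq_one {ι : Type*} [Fintype ι] {x : ι → ℂ}
    (hx : vnorm x = 1) : star x ⬝ᵥ x = 1 := by
  rw [vnorm, Real.sqrt_eq_one] at hx
  simp only [dotProduct, Pi.star_apply, Complex.star_def, Complex.conj_mul']
  exact_mod_cast hx

theorem LamNormSq_eq_sum_pow_mul_conj_pow (m : ℕ) (lam : ℂ) :
    (LamNormSq m lam : ℂ) = ∑ j ∈ Finset.range (m + 1), lam ^ j * conj lam ^ j := by
  simp only [LamNormSq, Complex.ofReal_sum, ← map_pow, Complex.mul_conj', norm_pow, pow_mul']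
  push_cast
  rfl

theorem one_le_LamNormSq (m : ℕ) (lam : ℂ) : 1 ≤ LamNormSq m lam := by
  rw [LamNormSq, Finset.sum_range_succ']
  simpa using Finset.sum_nonneg fun j _ => pow_nonneg (norm_nonneg lam) (2 * (j + 1))

section Projector

variable {ι R : Type*} [Fintype ι] [DecidableEq ι] [CommRing R]

theorem one_sub_vecMulVec_mulVec_self {x y : ι → R} (hyx : y ⬝ᵥ x = 1) :
    (1 - vecMulVec x y) *ᵥ x = 0 := by
  rw [sub_mulVec, one_mulVec, vecMulVec_mulVec, op_smul_eq_smul, hyx, one_smul, sub_self]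

theorem transpose_one_sub_vecMulVec_mulVec (x y r : ι → R) :
    (1 - vecMulVec x y)ᵀ *ᵥ r = r - (x ⬝ᵥ r) • y := by
  rw [transpose_sub, transpose_one, transpose_vecMulVec, sub_mulVec, one_mulVec,
    vecMulVec_mulVec, op_smul_eq_smul]

end Projector

theorem dotProduct_mulVec_self_of_palindromic {ι R : Type*} [Fintype ι] [CommSemiring R] {m : ℕ}
    {ε : R} {A : ℕ → Matrix ι ι R} (hA : ∀ j ≤ m, A (m - j) = ε • (A j)ᵀ) (x : ι → R) {j : ℕ}
    (hj : j ≤ m) : x ⬝ᵥ (A (m - j) *ᵥ x) = ε * (x ⬝ᵥ (A j *ᵥ x)) := by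
  rw [hA j hj, smul_mulVec, dotProduct_smul, smul_eq_mul, mulVec_transpose, dotProduct_comm,
    dotProduct_mulVec]

section MatrixPolynomial

variable {n : ℕ}

theorem evalP_congr {m : ℕ} {A B : ℕ → Matrix (Fin n) (Fin n) ℂ} (h : ∀ j ≤ m, A j = B j)
    (z : ℂ) : evalP m A z = evalP m B z :=
  Finset.sum_congr rfl fun j hj => by
    rw [h j (Nat.lt_succ_iff.mp (Finset.mem_range.mp hj))]

theorem evalP_mulVec (m : ℕ) (A : ℕ → Matrix (Fin n) (Fin n) ℂ) (z : ℂ) (w : Fin n → ℂ) :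
    evalP m A z *ᵥ w = ∑ j ∈ Finset.range (m + 1), z ^ j • (A j *ᵥ w) := by
  simp only [evalP, sum_mulVec, smul_mulVec]

end MatrixPolynomial

section Perturbation

variable {ι : Type*}

/-- The paper's `ΔA_j` is `palPerturbation m ε λ̄ ‖Λ_m‖₂⁻² (j ↦ xᵀ A_j x) x̄ (P_xᵀ r) j`. -/
def palPerturbation (m : ℕ) (ε μ : ℂ) (s : ℝ) (c : ℕ → ℂ) (y u : ι → ℂ) (j : ℕ) :
    Matrix ι ι ℂ :=
  -(c j • vecMulVec y y) + s • (μ ^ j • vecMulVec u y + ε • (μ ^ (m - j) • vecMulVec y u))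

theorem palPerturbation_tsub_eq_smul_transpose {m : ℕ} {ε : ℂ} (hε : ε * ε = 1) (μ : ℂ) (s : ℝ)
    {c : ℕ → ℂ} (hc : ∀ j ≤ m, c (m - j) = ε * c j) (y u : ι → ℂ) {j : ℕ} (hj : j ≤ m) :
    palPerturbation m ε μ s c y u (m - j) = ε • (palPerturbation m ε μ s c y u j)ᵀ := by
  simp only [palPerturbation, hc j hj, Nat.sub_sub_self hj, transpose_add, transpose_neg,
    transpose_smul, transpose_vecMulVec, smul_add, smul_neg, mul_smul]
  rw [smul_comm ε s (ε • _), smul_smul ε ε, hε, one_smul, smul_comm ε s]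
  abel

theorem palPerturbation_mulVec [Fintype ι] {m : ℕ} (ε μ : ℂ) (s : ℝ) (c : ℕ → ℂ) {y u z : ι → ℂ}
    (hyz : y ⬝ᵥ z = 1) (huz : u ⬝ᵥ z = 0) (j : ℕ) :
    palPerturbation m ε μ s c y u j *ᵥ z = -c j • y + ((s : ℂ) * μ ^ j) • u := by
  simp only [palPerturbation, add_mulVec, neg_mulVec, smul_mulVec, vecMulVec_mulVec,
    op_smul_eq_smul, hyz, huz, one_smul, zero_smul, smul_zero, add_zero, neg_smul]
  rw [← smul_smul, Complex.coe_smul]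

theorem evalP_palPerturbation_mulVec {n m : ℕ} (ε μ : ℂ) (s : ℝ) (c : ℕ → ℂ)
    {y u z : Fin n → ℂ} (hyz : y ⬝ᵥ z = 1) (huz : u ⬝ᵥ z = 0) (lam : ℂ) :
    evalP m (palPerturbation m ε μ s c y u) lam *ᵥ z =
      -(∑ j ∈ Finset.range (m + 1), lam ^ j * c j) • y +
        ((s : ℂ) * ∑ j ∈ Finset.range (m + 1), lam ^ j * μ ^ j) • u := by
  rw [evalP_mulVec]
  simp only [palPerturbation_mulVec ε μ s c hyz huz, smul_add, smul_smul, Finset.sum_add_distrib]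
  rw [← Finset.sum_smul, ← Finset.sum_smul]
  simp only [mul_neg, Finset.sum_neg_distrib, Finset.mul_sum, mul_left_comm _ (s : ℂ)]

end Perturbation

theorem stmt_0_general {m n : ℕ}
    (ε : ℂ) (hε : ε = 1 ∨ ε = -1)
    (A : ℕ → Matrix (Fin n) (Fin n) ℂ)
    (hpal : ∀ j ≤ m, A (m - j) = ε • (A j).transpose)
    (lam : ℂ) (x : Fin n → ℂ) (hx : vnorm x = 1)
    (r : Fin n → ℂ) (hr : r = -(evalP m A lam).mulVec x)
    (Px : Matrix (Fin n) (Fin n) ℂ)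
    (hPx : Px = 1 - Matrix.vecMulVec x (star x))
    (ΔA : ℕ → Matrix (Fin n) (Fin n) ℂ)
    (hΔA : ∀ j ≤ m, ΔA j =
      -((dotProduct x ((A j).mulVec x)) • Matrix.vecMulVec (star x) (star x)) +
        (LamNormSq m lam)⁻¹ •
          ((starRingEnd ℂ lam) ^ j • Matrix.vecMulVec ((Px.transpose).mulVec r) (star x) +
            ε • ((starRingEnd ℂ lam) ^ (m - j) •
              Matrix.vecMulVec (star x) (Matrix.vecMul r Px)))) :
    (∀ j ≤ m, ΔA (m - j) = ε • (ΔA j).transpose) ∧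
      (evalP m A lam).mulVec x + (evalP m ΔA lam).mulVec x = 0 := by
  have hxx : star x ⬝ᵥ x = 1 := star_dotProduct_self_eq_one_of_vnorm_eq_one hx
  have hΔA_pert : ∀ j ≤ m, ΔA j = palPerturbation m ε (conj lam) (LamNormSq m lam)⁻¹
      (fun j => x ⬝ᵥ (A j *ᵥ x)) (star x) (r ᵥ* Px) j := by
    intro j hj
    rw [hΔA j hj, mulVec_transpose]
    rfl
  refine ⟨fun j hj => ?_, ?_⟩
  · rw [hΔA_pert _ (Nat.sub_le m j), hΔA_pert j hj]
    exact palPerturbation_tsub_eq_smul_transpose (by rcases hε with rfl | rfl <;> norm_num) _ _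
      (fun j hj => dotProduct_mulVec_self_of_palindromic hpal x hj) _ _ hj
  have hrx : (r ᵥ* Px) ⬝ᵥ x = 0 := by
    rw [← dotProduct_mulVec, hPx, one_sub_vecMulVec_mulVec_self hxx, dotProduct_zero]
  have hquad : ∑ j ∈ Finset.range (m + 1), lam ^ j * (x ⬝ᵥ (A j *ᵥ x)) = -(x ⬝ᵥ r) := by
    simp only [hr, dotProduct_neg, neg_neg, evalP_mulVec, dotProduct_sum, dotProduct_smul,
      smul_eq_mul]
  have hscale : (((LamNormSq m lam)⁻¹ : ℝ) : ℂ) *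
      ∑ j ∈ Finset.range (m + 1), lam ^ j * conj lam ^ j = 1 := by
    rw [← LamNormSq_eq_sum_pow_mul_conj_pow, ← Complex.ofReal_mul,
      inv_mul_cancel₀ (by linarith [one_le_LamNormSq m lam]), Complex.ofReal_one]
  have hΔPx : evalP m ΔA lam *ᵥ x = r := by
    rw [evalP_congr hΔA_pert, evalP_palPerturbation_mulVec _ _ _ _ hxx hrx, hquad, hscale, one_smul,
      neg_neg, ← mulVec_transpose, hPx, transpose_one_sub_vecMulVec_mulVec]
    abel
  rw [hΔPx, hr, add_neg_cancel]

/-- existence of a T-palindromic (ε = 1) / T-anti-palindromic (ε = −1)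
structured perturbation `ΔP` with `P(λ)x + ΔP(λ)x = 0`. -/
theorem stmt_0 {m n : ℕ} (hm : 0 < m) (hn : 0 < n)
    (ε : ℂ) (hε : ε = 1 ∨ ε = -1)
    (A : ℕ → Matrix (Fin n) (Fin n) ℂ)
    (hpal : ∀ j ≤ m, A (m - j) = ε • (A j).transpose)
    (lam : ℂ) (x : Fin n → ℂ) (hx : vnorm x = 1)
    (r : Fin n → ℂ) (hr : r = -(evalP m A lam).mulVec x)
    (Px : Matrix (Fin n) (Fin n) ℂ)
    (hPx : Px = 1 - Matrix.vecMulVec x (star x))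
    (ΔA : ℕ → Matrix (Fin n) (Fin n) ℂ)
    (hΔA : ∀ j ≤ m, ΔA j =
      -((dotProduct x ((A j).mulVec x)) • Matrix.vecMulVec (star x) (star x)) +
        (LamNormSq m lam)⁻¹ •
          ((starRingEnd ℂ lam) ^ j • Matrix.vecMulVec ((Px.transpose).mulVec r) (star x) +
            ε • ((starRingEnd ℂ lam) ^ (m - j) •
              Matrix.vecMulVec (star x) (Matrix.vecMul r Px)))) :
    (∀ j ≤ m, ΔA (m - j) = ε • (ΔA j).transpose) ∧
      (evalP m A lam).mulVec x + (evalP m ΔA lam).mulVec x = 0 :=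
  stmt_0_general ε hε A hpal lam x hx r hr Px hPx ΔA hΔA
end
end

section
/- Let m be odd and let P be a regular T-palindromic matrix polynomial of degree m with n×n coefficients, and let x ∈ ℂⁿ with ‖x‖₂ = 1. Then the Frobenius-norm structured backward error over the class S_p of T-palindromic polynomials of degree m at λ = −1 satisfies η_F^{S_p}(−1, x, P) = √(2/(m+1)) · ‖P(−1)x‖₂. -/
noncomputable section

/-- Frobenius-norm structured backward error over T-palindromic polynomials of degree `m`. -/
def etaF_Tpal {n : ℕ} (m : ℕ) (A : ℕ → Matrix (Fin n) (Fin n) ℂ) (lam : ℂ)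
    (x : Fin n → ℂ) : ℝ :=
  sInf { e : ℝ | ∃ Δ : ℕ → Matrix (Fin n) (Fin n) ℂ,
    (∀ j ≤ m, Δ (m - j) = (Δ j).transpose) ∧
    (evalP m A lam).mulVec x + (evalP m Δ lam).mulVec x = 0 ∧
    e = Real.sqrt (∑ j ∈ Finset.range (m + 1), frobNorm (Δ j) ^ 2) }

/-! At `λ = -1` with `m` odd, the palindromic symmetry `ΔA_{m-j} = ΔA_jᵀ` makes `ΔP(-1)`
skew-symmetric, so a feasible perturbation is a skew-symmetric `S = ΔP(-1)` with `S x = -r`,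
`r = P(-1) x`, split among `m + 1` coefficients. Since `‖ΔP(-1)‖_F² ≤ (m + 1) ∑ ‖ΔA_j‖_F²` and, for
skew-symmetric `S` and unit `x`, Cauchy–Schwarz against `S₀ = -(r x* - x̄ rᵀ)` (for which
`⟪S₀, S⟫ = ‖S₀‖_F² = 2‖r‖²`) gives `‖S‖_F² ≥ 2‖r‖²`, every feasible perturbation has
`∑ ‖ΔA_j‖_F² ≥ 2‖r‖² / (m + 1)`. Equality holds for `ΔA_j = (-1)ʲ S₀ / (m + 1)`. -/

open scoped ComplexConjugate Matrix
open Finset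

section SkewSymmetric

variable {ι : Type*}

/-- `r x* - x̄ rᵀ`: for a unit vector `x` with `rᵀ x = 0`, the skew-symmetric matrix of least
Frobenius norm mapping `x` to `r`. -/
def skewOuter (x r : ι → ℂ) : Matrix ι ι ℂ :=
  Matrix.of fun i k => r i * conj (x k) - conj (x i) * r k

lemma skewOuter_transpose (x r : ι → ℂ) : (skewOuter x r)ᵀ = -skewOuter x r := by
  ext i k
  simp only [skewOuter, Matrix.transpose_apply, Matrix.neg_apply, Matrix.of_apply]
  ring

def entriesL2 : Matrix ι ι ℂ →ₗ[ℂ] EuclideanSpace ℂ (ι × ι) where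
  toFun M := WithLp.toLp 2 fun p => M p.1 p.2
  map_add' _ _ := rfl
  map_smul' _ _ := rfl

lemma entriesL2_apply (M : Matrix ι ι ℂ) (p : ι × ι) : entriesL2 M p = M p.1 p.2 := rfl

variable [Fintype ι]

lemma frobNorm_eq_norm_entriesL2 (M : Matrix ι ι ℂ) : frobNorm M = ‖entriesL2 M‖ := by
  rw [frobNorm, EuclideanSpace.norm_eq, Fintype.sum_prod_type]
  rfl

lemma frobNorm_smul (c : ℂ) (M : Matrix ι ι ℂ) : frobNorm (c • M) = ‖c‖ * frobNorm M := by
  rw [frobNorm_eq_norm_entriesL2, frobNorm_eq_norm_entriesL2, map_smul, norm_smul]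

lemma frobNorm_nonneg (M : Matrix ι ι ℂ) : 0 ≤ frobNorm M := Real.sqrt_nonneg _

lemma vnorm_nonneg (x : ι → ℂ) : 0 ≤ vnorm x := Real.sqrt_nonneg _

lemma vnorm_sq (x : ι → ℂ) : vnorm x ^ 2 = ∑ i, ‖x i‖ ^ 2 :=
  Real.sq_sqrt (by positivity)

lemma vnorm_neg (x : ι → ℂ) : vnorm (-x) = vnorm x := by
  simp only [vnorm, Pi.neg_apply, norm_neg]

lemma star_dotProduct_self (x : ι → ℂ) : star x ⬝ᵥ x = ((vnorm x ^ 2 : ℝ) : ℂ) := by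
  simp only [dotProduct, Pi.star_apply, RCLike.star_def, RCLike.conj_mul, vnorm_sq]
  push_cast
  rfl

lemma dotProduct_mulVec_self_of_transpose_eq_neg {M : Matrix ι ι ℂ} (hM : Mᵀ = -M)
    (x : ι → ℂ) : x ⬝ᵥ M *ᵥ x = 0 := by
  have h : x ⬝ᵥ M *ᵥ x = -(x ⬝ᵥ M *ᵥ x) := calc
    x ⬝ᵥ M *ᵥ x = Mᵀ *ᵥ x ⬝ᵥ x := by rw [Matrix.dotProduct_mulVec, Matrix.mulVec_transpose]
    _ = -(x ⬝ᵥ M *ᵥ x) := by rw [hM, Matrix.neg_mulVec, neg_dotProduct, dotProduct_comm]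
  exact self_eq_neg.mp h

lemma skewOuter_mulVec {x r : ι → ℂ} (hx : vnorm x = 1) (hrx : r ⬝ᵥ x = 0) :
    skewOuter x r *ᵥ x = r := by
  have hxx : ∑ k, conj (x k) * x k = 1 := by
    simpa [hx, dotProduct] using star_dotProduct_self x
  ext i
  simp only [skewOuter, Matrix.mulVec, dotProduct, Matrix.of_apply] at hrx ⊢
  simp only [sub_mul, sum_sub_distrib, mul_assoc, ← mul_sum, hxx, hrx]
  ring

lemma inner_entriesL2_skewOuter (x r : ι → ℂ) (M : Matrix ι ι ℂ) :
    inner ℂ (entriesL2 (skewOuter x r)) (entriesL2 M) = star r ⬝ᵥ M *ᵥ x - star r ⬝ᵥ x ᵥ* M := by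
  have entry : ∀ i k, M i k * conj (skewOuter x r i k)
      = conj (r i) * (M i k * x k) - conj (r k) * (x i * M i k) := fun i k => by
    simp only [skewOuter, Matrix.of_apply, map_sub, map_mul, Complex.conj_conj]
    ring
  simp only [PiLp.inner_apply, RCLike.inner_apply, entriesL2_apply, Fintype.sum_prod_type, entry,
    sum_sub_distrib, dotProduct, Matrix.mulVec, Matrix.vecMul, Pi.star_apply, RCLike.star_def,
    mul_sum]
  rw [sum_comm (f := fun i k => conj (r k) * (x i * M i k))]

lemma inner_entriesL2_skewOuter_mulVec {M : Matrix ι ι ℂ} (hM : Mᵀ = -M) (x : ι → ℂ) :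
    inner ℂ (entriesL2 (skewOuter x (M *ᵥ x))) (entriesL2 M) = 2 * (vnorm (M *ᵥ x) ^ 2 : ℝ) := by
  rw [inner_entriesL2_skewOuter, ← Matrix.mulVec_transpose, hM, Matrix.neg_mulVec,
    dotProduct_neg, sub_neg_eq_add, star_dotProduct_self]
  ring

lemma frobNorm_skewOuter_sq {x r : ι → ℂ} (hx : vnorm x = 1) (hrx : r ⬝ᵥ x = 0) :
    frobNorm (skewOuter x r) ^ 2 = 2 * vnorm r ^ 2 := by
  have h := inner_entriesL2_skewOuter_mulVec (skewOuter_transpose x r) x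
  rw [skewOuter_mulVec hx hrx, inner_self_eq_norm_sq_to_K] at h
  rw [frobNorm_eq_norm_entriesL2]
  apply Complex.ofReal_injective
  push_cast at h ⊢
  exact h

lemma two_mul_vnorm_mulVec_sq_le {M : Matrix ι ι ℂ} (hM : Mᵀ = -M) {x : ι → ℂ}
    (hx : vnorm x = 1) : 2 * vnorm (M *ᵥ x) ^ 2 ≤ frobNorm M ^ 2 := by
  set r := M *ᵥ x
  have hrx : r ⬝ᵥ x = 0 := by
    rw [dotProduct_comm]; exact dotProduct_mulVec_self_of_transpose_eq_neg hM x
  have hcs := norm_inner_le_norm (𝕜 := ℂ) (entriesL2 (skewOuter x r)) (entriesL2 M)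
  rw [inner_entriesL2_skewOuter_mulVec hM, ← frobNorm_eq_norm_entriesL2,
    ← frobNorm_eq_norm_entriesL2] at hcs
  have hS := frobNorm_skewOuter_sq hx hrx
  have hnorm : ‖(2 : ℂ) * ((vnorm r ^ 2 : ℝ) : ℂ)‖ = 2 * vnorm r ^ 2 := by
    rw [norm_mul, Complex.norm_real, Real.norm_of_nonneg (by positivity)]; norm_num
  rw [hnorm] at hcs
  nlinarith [sq_nonneg (frobNorm (skewOuter x r) - frobNorm M)]

end SkewSymmetric

lemma neg_one_pow_sub_of_odd {R : Type*} [Ring R] {m j : ℕ} (hm : Odd m) (hj : j ≤ m) :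
    (-1 : R) ^ (m - j) = -(-1) ^ j := by
  rcases Nat.even_or_odd j with hj' | hj'
  · rw [(Nat.Odd.sub_even hj hm hj').neg_one_pow, hj'.neg_one_pow]
  · rw [(Nat.Odd.sub_odd hm hj').neg_one_pow, hj'.neg_one_pow, neg_neg]

section MatrixPolynomial

variable {n m : ℕ}

def IsTPalindromic (m : ℕ) (B : ℕ → Matrix (Fin n) (Fin n) ℂ) : Prop :=
  ∀ j ≤ m, B (m - j) = (B j)ᵀ

lemma LamNormSq_neg_one (m : ℕ) : LamNormSq m (-1) = m + 1 := by
  simp [LamNormSq]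

lemma frobNorm_evalP_sq_le (B : ℕ → Matrix (Fin n) (Fin n) ℂ) (z : ℂ) :
    frobNorm (evalP m B z) ^ 2 ≤ LamNormSq m z * ∑ j ∈ range (m + 1), frobNorm (B j) ^ 2 := by
  have htri : frobNorm (evalP m B z) ≤ ∑ j ∈ range (m + 1), ‖z‖ ^ j * frobNorm (B j) := by
    simp only [frobNorm_eq_norm_entriesL2, evalP, map_sum, map_smul]
    refine (norm_sum_le _ _).trans_eq (sum_congr rfl fun j _ => ?_)
    rw [norm_smul, norm_pow]
  calc frobNorm (evalP m B z) ^ 2 ≤ (∑ j ∈ range (m + 1), ‖z‖ ^ j * frobNorm (B j)) ^ 2 :=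
        pow_le_pow_left₀ (frobNorm_nonneg _) htri 2
    _ ≤ (∑ j ∈ range (m + 1), (‖z‖ ^ j) ^ 2) * ∑ j ∈ range (m + 1), frobNorm (B j) ^ 2 :=
        sum_mul_sq_le_sq_mul_sq _ _ _
    _ = LamNormSq m z * ∑ j ∈ range (m + 1), frobNorm (B j) ^ 2 := by
        simp only [LamNormSq, ← pow_mul, mul_comm]

lemma evalP_neg_one_transpose (hm : Odd m) {B : ℕ → Matrix (Fin n) (Fin n) ℂ}
    (hB : IsTPalindromic m B) : (evalP m B (-1))ᵀ = -evalP m B (-1) := by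
  have le_of_mem : ∀ j ∈ range (m + 1), j ≤ m := fun j hj => Nat.lt_succ_iff.mp (mem_range.mp hj)
  calc (evalP m B (-1))ᵀ = ∑ j ∈ range (m + 1), (-1 : ℂ) ^ (m - (m - j)) • B (m - j) := by
        rw [evalP, Matrix.transpose_sum]
        refine sum_congr rfl fun j hj => ?_
        rw [Matrix.transpose_smul, ← hB j (le_of_mem j hj), Nat.sub_sub_self (le_of_mem j hj)]
    _ = ∑ j ∈ range (m + 1), (-1 : ℂ) ^ (m - j) • B j :=
        sum_range_reflect (fun j => (-1 : ℂ) ^ (m - j) • B j) (m + 1)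
    _ = -evalP m B (-1) := by
        rw [evalP, ← sum_neg_distrib]
        refine sum_congr rfl fun j hj => ?_
        rw [neg_one_pow_sub_of_odd hm (le_of_mem j hj), neg_smul]

lemma isTPalindromic_alternating (hm : Odd m) {S : Matrix (Fin n) (Fin n) ℂ} (hS : Sᵀ = -S) :
    IsTPalindromic m fun j => (-1 : ℂ) ^ j • S := by
  intro j hj
  dsimp only
  rw [Matrix.transpose_smul, hS, neg_one_pow_sub_of_odd hm hj, neg_smul, smul_neg]

lemma evalP_alternating_neg_one (S : Matrix (Fin n) (Fin n) ℂ) :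
    evalP m (fun j => (-1 : ℂ) ^ j • S) (-1) = ((m : ℂ) + 1) • S := by
  simp only [evalP, smul_smul, ← pow_add, ← two_mul, pow_mul, neg_one_sq, one_pow, one_smul,
    sum_const, card_range]
  norm_cast

lemma sum_frobNorm_alternating_sq (S : Matrix (Fin n) (Fin n) ℂ) :
    ∑ j ∈ range (m + 1), frobNorm ((-1 : ℂ) ^ j • S) ^ 2 = (m + 1) * frobNorm S ^ 2 := by
  simp [frobNorm_smul]

end MatrixPolynomial

section BackwardError

variable {n m : ℕ}

lemma two_div_mul_vnorm_sq_le_sum_frobNorm_sq (hm : Odd m) {Δ : ℕ → Matrix (Fin n) (Fin n) ℂ}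
    (hΔ : IsTPalindromic m Δ) {x : Fin n → ℂ} (hx : vnorm x = 1) :
    2 / (m + 1) * vnorm (evalP m Δ (-1) *ᵥ x) ^ 2 ≤ ∑ j ∈ range (m + 1), frobNorm (Δ j) ^ 2 := by
  have hskew := two_mul_vnorm_mulVec_sq_le (evalP_neg_one_transpose hm hΔ) hx
  have hsum := frobNorm_evalP_sq_le (m := m) Δ (-1)
  rw [LamNormSq_neg_one] at hsum
  rw [div_mul_eq_mul_div, div_le_iff₀ (by positivity)]
  linarith

lemma sum_frobNorm_sq_alternating_skewOuter {x r : Fin n → ℂ} (hx : vnorm x = 1)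
    (hrx : r ⬝ᵥ x = 0) :
    ∑ j ∈ range (m + 1), frobNorm ((-1 : ℂ) ^ j • (((m : ℂ) + 1)⁻¹ • skewOuter x r)) ^ 2
      = 2 / (m + 1) * vnorm r ^ 2 := by
  have hnorm : ‖((m : ℂ) + 1)⁻¹‖ = ((m : ℝ) + 1)⁻¹ := by
    rw [norm_inv]; norm_cast
  rw [sum_frobNorm_alternating_sq, frobNorm_smul, mul_pow, frobNorm_skewOuter_sq hx hrx, hnorm]
  field_simp

end BackwardError

theorem stmt_4_general {m n : ℕ} (hm : Odd m)
    (A : ℕ → Matrix (Fin n) (Fin n) ℂ)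
    (hpal : ∀ j ≤ m, A (m - j) = (A j).transpose)
    (x : Fin n → ℂ) (hx : vnorm x = 1) :
    etaF_Tpal m A (-1) x =
      Real.sqrt (2 / ((m : ℝ) + 1)) * vnorm ((evalP m A (-1)).mulVec x) := by
  set r := evalP m A (-1) *ᵥ x
  have hrx : -r ⬝ᵥ x = 0 := by
    rw [neg_dotProduct, dotProduct_comm,
      dotProduct_mulVec_self_of_transpose_eq_neg (evalP_neg_one_transpose hm hpal), neg_zero]
  rw [← Real.sqrt_sq (vnorm_nonneg r), ← Real.sqrt_mul (by positivity)]
  refine IsLeast.csInf_eq ⟨?_, ?_⟩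
  · set S := ((m : ℂ) + 1)⁻¹ • skewOuter x (-r)
    refine ⟨fun j => (-1 : ℂ) ^ j • S, isTPalindromic_alternating hm ?_, ?_, ?_⟩
    · rw [Matrix.transpose_smul, skewOuter_transpose, smul_neg]
    · rw [evalP_alternating_neg_one, smul_smul, mul_inv_cancel₀ (by norm_cast), one_smul,
        skewOuter_mulVec hx hrx, add_neg_cancel]
    · rw [sum_frobNorm_sq_alternating_skewOuter hx hrx, vnorm_neg]
  · rintro e ⟨Δ, hΔ, hsolve, rfl⟩
    have hΔx : evalP m Δ (-1) *ᵥ x = -r := eq_neg_of_add_eq_zero_right hsolve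
    gcongr
    simpa only [hΔx, vnorm_neg] using two_div_mul_vnorm_sq_le_sum_frobNorm_sq hm hΔ hx

/-- Frobenius structured backward error, T-palindromic, m odd, λ = −1. -/
theorem stmt_4 {m n : ℕ} (hm : Odd m) (hn : 0 < n)
    (A : ℕ → Matrix (Fin n) (Fin n) ℂ)
    (hpal : ∀ j ≤ m, A (m - j) = (A j).transpose)
    (hreg : ∃ z : ℂ, (evalP m A z).det ≠ 0)
    (x : Fin n → ℂ) (hx : vnorm x = 1) :
    etaF_Tpal m A (-1) x =
      Real.sqrt (2 / ((m : ℝ) + 1)) * vnorm ((evalP m A (-1)).mulVec x) :=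
  stmt_4_general hm A hpal x hx
end
end
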